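/- arXiv:1412.7748 — 5 statements merged into one kernel-verified Lean document; each statement's English description precedes it below -/
import Mathlib

section
/- Let A be an m×n real matrix with unit-norm columns and coherence M(A) > 0. For each nonzero v in the null space of A and each index i, |v_i|·(1 + M(A)) ≤ M(A)·‖v‖₁. -/
noncomputable section
open scoped Matrix

def l1 {n : ℕ} (v : Fin n → ℝ) : ℝ := ∑ i, |v i|

def linf {n : ℕ} (v : Fin n → ℝ) : ℝ := ‖v‖

def l0 {n : ℕ} (v : Fin n → ℝ) : ℕ := (Finset.univ.filter fun i => v i ≠ 0).card

def restrict {n : ℕ} (S : Finset (Fin n)) (v : Fin n → ℝ) : Fin n → ℝ :=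
  fun i => if i ∈ S then v i else 0

def coherence {m n : ℕ} (A : Matrix (Fin m) (Fin n) ℝ) : ℝ :=
  sSup {x | ∃ i j : Fin n, i ≠ j ∧ x = abs ((fun r => A r i) ⬝ᵥ (fun r => A r j))}

theorem stmt4 {m n : ℕ} (A : Matrix (Fin m) (Fin n) ℝ)
    (hunit : ∀ i : Fin n, (fun r => A r i) ⬝ᵥ (fun r => A r i) = 1)
    (hM : 0 < coherence A) :
    ∀ v : Fin n → ℝ, A.mulVec v = 0 → v ≠ 0 → ∀ i : Fin n,
      |v i| * (1 + coherence A) ≤ coherence A * l1 v := by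
  intro v hv _ i
  set M := coherence A with hMdef
  have hbdd : BddAbove {x | ∃ i j : Fin n, i ≠ j ∧
      x = |(fun r => A r i) ⬝ᵥ (fun r => A r j)|} := by
    refine ⟨1, ?_⟩
    rintro x ⟨a, b, hab, rfl⟩
    have h1 := Finset.sum_mul_sq_le_sq_mul_sq Finset.univ (fun r => A r a) (fun r => A r b)
    have ha := hunit a
    have hb := hunit b
    simp only [dotProduct] at *
    have hsa : ∑ r, (A r a) ^ 2 = 1 := by
      simpa [pow_two] using ha
    have hsb : ∑ r, (A r b) ^ 2 = 1 := by
      simpa [pow_two] using hb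
    rw [hsa, hsb, one_mul] at h1
    nlinarith [abs_nonneg (∑ r, A r a * A r b), sq_abs (∑ r, A r a * A r b)]
  have hle : ∀ j, j ≠ i → |(fun r => A r i) ⬝ᵥ (fun r => A r j)| ≤ M :=
    fun j hj => le_csSup hbdd ⟨i, j, hj.symm, rfl⟩
  -- key identity
  have hzero : ∑ j, ((fun r => A r i) ⬝ᵥ (fun r => A r j)) * v j = 0 := by
    have : ∑ r, A r i * A.mulVec v r = 0 := by
      simp [hv]
    calc ∑ j, ((fun r => A r i) ⬝ᵥ (fun r => A r j)) * v j
        = ∑ j, ∑ r, A r i * A r j * v j := by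
          simp [dotProduct, Finset.sum_mul]
      _ = ∑ r, ∑ j, A r i * A r j * v j := Finset.sum_comm
      _ = ∑ r, A r i * A.mulVec v r := by
          simp [Matrix.mulVec, dotProduct, Finset.mul_sum, mul_assoc]
      _ = 0 := this
  have hsplit : v i + ∑ j ∈ Finset.univ.erase i, ((fun r => A r i) ⬝ᵥ (fun r => A r j)) * v j = 0 := by
    have := Finset.add_sum_erase Finset.univ
      (fun j => ((fun r => A r i) ⬝ᵥ (fun r => A r j)) * v j) (Finset.mem_univ i)
    rw [← hzero, ← this, hunit i, one_mul]
  have habs : |v i| ≤ M * ∑ j ∈ Finset.univ.erase i, |v j| := by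
    have h1 : v i = -∑ j ∈ Finset.univ.erase i, ((fun r => A r i) ⬝ᵥ (fun r => A r j)) * v j := by
      linarith
    calc |v i| = |∑ j ∈ Finset.univ.erase i, ((fun r => A r i) ⬝ᵥ (fun r => A r j)) * v j| := by
          rw [h1, abs_neg]
      _ ≤ ∑ j ∈ Finset.univ.erase i, |((fun r => A r i) ⬝ᵥ (fun r => A r j)) * v j| :=
          Finset.abs_sum_le_sum_abs _ _
      _ ≤ ∑ j ∈ Finset.univ.erase i, M * |v j| := by
          refine Finset.sum_le_sum fun j hj => ?_
          rw [abs_mul]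
          exact mul_le_mul_of_nonneg_right (hle j (Finset.ne_of_mem_erase hj)) (abs_nonneg _)
      _ = M * ∑ j ∈ Finset.univ.erase i, |v j| := by rw [Finset.mul_sum]
  have hl1 : l1 v = |v i| + ∑ j ∈ Finset.univ.erase i, |v j| :=
    (Finset.add_sum_erase Finset.univ (fun j => |v j|) (Finset.mem_univ i)).symm
  nlinarith [habs, hl1, hM]
end
end

section
/- Let A be an m×n matrix with unit-norm columns, coherence M(A) > 0, and let k be a natural number with k < (1/2)(1 + 1/M(A)). Then the null space of A is strictly k-balanced: for every nonzero v with Av = 0 and every index set S with |S| = k, ‖v_S‖₁ < ‖v_{S^c}‖₁. -/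
noncomputable section
open scoped Matrix

theorem stmt5 {m n : ℕ} (A : Matrix (Fin m) (Fin n) ℝ)
    (hunit : ∀ i : Fin n, (fun r => A r i) ⬝ᵥ (fun r => A r i) = 1)
    (hM : 0 < coherence A) (k : ℕ)
    (hk : (k : ℝ) < (1 / 2) * (1 + 1 / coherence A)) :
    ∀ v : Fin n → ℝ, A.mulVec v = 0 → v ≠ 0 → ∀ S : Finset (Fin n), S.card = k →
      l1 (restrict S v) < l1 (restrict Sᶜ v) := by
  intro v hv hv0 S hS
  set M := coherence A with hMdef
  have hbdd : BddAbove {x | ∃ i j : Fin n, i ≠ j ∧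
      x = |((fun r => A r i) ⬝ᵥ (fun r => A r j))|} := by
    apply Set.Finite.bddAbove
    apply Set.Finite.subset
      (Set.finite_range fun p : Fin n × Fin n => |((fun r => A r p.1) ⬝ᵥ (fun r => A r p.2))|)
    rintro x ⟨i, j, -, rfl⟩
    exact ⟨(i, j), rfl⟩
  have hle : ∀ i j : Fin n, i ≠ j → |((fun r => A r i) ⬝ᵥ (fun r => A r j))| ≤ M :=
    fun i j hij => le_csSup hbdd ⟨i, j, hij, rfl⟩
  -- per-coordinate bound
  have hcoord : ∀ i : Fin n, |v i| ≤ M * (l1 v - |v i|) := by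
    intro i
    have h0 : (fun r => A r i) ⬝ᵥ A.mulVec v = 0 := by
      rw [hv]; simp [dotProduct]
    rw [Matrix.dotProduct_mulVec] at h0
    have hexp : ∑ j, (((fun r => A r i) ⬝ᵥ (fun r => A r j)) * v j) = 0 := by
      rw [← h0]
      apply Finset.sum_congr rfl
      intro j _
      simp [Matrix.vecMul, dotProduct]
    have hvi : v i = -∑ j ∈ Finset.univ.erase i,
        (((fun r => A r i) ⬝ᵥ (fun r => A r j)) * v j) := by
      have h := Finset.add_sum_erase Finset.univ
        (fun j => ((fun r => A r i) ⬝ᵥ (fun r => A r j)) * v j) (Finset.mem_univ i)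
      simp only [hexp, hunit i, one_mul] at h
      linarith
    have h1 : |v i| ≤ ∑ j ∈ Finset.univ.erase i, M * |v j| := by
      rw [hvi, abs_neg]
      calc |∑ j ∈ Finset.univ.erase i, (((fun r => A r i) ⬝ᵥ (fun r => A r j)) * v j)|
          ≤ ∑ j ∈ Finset.univ.erase i,
              |(((fun r => A r i) ⬝ᵥ (fun r => A r j)) * v j)| := Finset.abs_sum_le_sum_abs _ _
        _ ≤ ∑ j ∈ Finset.univ.erase i, M * |v j| := by
            apply Finset.sum_le_sum
            intro j hj
            rw [abs_mul]
            exact mul_le_mul_of_nonneg_right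
              (hle i j (Ne.symm (Finset.ne_of_mem_erase hj))) (abs_nonneg _)
    have h2 : ∑ j ∈ Finset.univ.erase i, M * |v j| = M * (l1 v - |v i|) := by
      rw [← Finset.mul_sum, Finset.sum_erase_eq_sub (Finset.mem_univ i)]
      rfl
    linarith [h1, h2.symm ▸ h1]
  have habs : ∀ i, (0:ℝ) ≤ |v i| := fun i => abs_nonneg _
  have hT : 0 < l1 v := by
    obtain ⟨i, hi⟩ := Function.ne_iff.mp hv0
    exact Finset.sum_pos' (fun j _ => abs_nonneg _)
      ⟨i, Finset.mem_univ i, abs_pos.mpr hi⟩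
  -- restriction sums
  have hres : ∀ T : Finset (Fin n), l1 (restrict T v) = ∑ i ∈ T, |v i| := by
    intro T
    simp [l1, restrict, apply_ite abs, Finset.sum_ite_mem]
  have hsplit : l1 v = l1 (restrict S v) + l1 (restrict Sᶜ v) := by
    rw [hres, hres]
    unfold l1
    exact (Finset.sum_add_sum_compl S fun i => |v i|).symm
  -- sum over S
  have hSsum : (1 + M) * l1 (restrict S v) ≤ (k : ℝ) * (M * l1 v) := by
    rw [hres]
    calc (1 + M) * ∑ i ∈ S, |v i| = ∑ i ∈ S, (1 + M) * |v i| := by rw [Finset.mul_sum]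
      _ ≤ ∑ i ∈ S, M * l1 v := by
          apply Finset.sum_le_sum
          intro i _
          have := hcoord i
          nlinarith [habs i]
      _ = (k : ℝ) * (M * l1 v) := by rw [Finset.sum_const, hS, nsmul_eq_mul]
  have h2kM : 2 * (k : ℝ) * M < 1 + M := by
    have : (k : ℝ) * M < (1 / 2) * (1 + 1 / M) * M := by
      exact mul_lt_mul_of_pos_right hk hM
    have hinv : (1 / M) * M = 1 := by field_simp
    nlinarith [this, hinv]
  have ha : 0 ≤ l1 (restrict S v) := by
    rw [hres]; exact Finset.sum_nonneg fun i _ => abs_nonneg _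
  set a := l1 (restrict S v)
  set b := l1 (restrict Sᶜ v)
  nlinarith [mul_lt_mul_of_pos_right h2kM hT, hSsum, hsplit, hM, hT]
end
end

section
/- Let A be an m×n matrix with unit-norm columns and coherence M(A) > 0. If a vector x̃ ∈ R^n has fewer than (1/2)(1 + 1/M(A)) nonzero entries, then x̃ is the unique solution of min ‖x‖₁ subject to Ax = Ax̃. -/
noncomputable section
open scoped Matrix

theorem stmt14 {m n : ℕ} (A : Matrix (Fin m) (Fin n) ℝ)
    (hunit : ∀ i : Fin n, (fun r => A r i) ⬝ᵥ (fun r => A r i) = 1)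
    (hM : 0 < coherence A)
    (xt : Fin n → ℝ) (hxt : (l0 xt : ℝ) < (1 / 2) * (1 + 1 / coherence A)) :
    ∀ x : Fin n → ℝ, A.mulVec x = A.mulVec xt → x ≠ xt → l1 xt < l1 x := by
  intro x hAx hne
  set M := coherence A with hMdef
  set h : Fin n → ℝ := fun i => x i - xt i with hh
  have hAh : A.mulVec h = 0 := by
    funext r
    simp only [Matrix.mulVec, dotProduct, hh, mul_sub, Finset.sum_sub_distrib,
      Pi.zero_apply]
    have h1 := congrFun hAx r
    simp only [Matrix.mulVec, dotProduct] at h1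
    linarith
  have hhne : ∃ i, h i ≠ 0 := by
    by_contra hcon
    push_neg at hcon
    exact hne (funext fun i => by have := hcon i; simp [hh] at this; linarith)
  have hbdd : BddAbove {x | ∃ i j : Fin n, i ≠ j ∧
      x = |(fun r => A r i) ⬝ᵥ (fun r => A r j)|} := by
    apply Set.Finite.bddAbove
    apply Set.Finite.subset (Set.finite_range
      (fun p : Fin n × Fin n => |(fun r => A r p.1) ⬝ᵥ (fun r => A r p.2)|))
    rintro y ⟨i, j, _, rfl⟩
    exact ⟨(i, j), rfl⟩
  have hG : ∀ i j : Fin n, i ≠ j → |(fun r => A r i) ⬝ᵥ (fun r => A r j)| ≤ M :=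
    fun i j hij => le_csSup hbdd ⟨i, j, hij, rfl⟩
  set T : ℝ := ∑ i, |h i| with hT
  have hTpos : 0 < T := by
    obtain ⟨i, hi⟩ := hhne
    have h1 : |h i| ≤ T := Finset.single_le_sum (f := fun j => |h j|)
      (fun j _ => abs_nonneg _) (Finset.mem_univ i)
    have h2 : 0 < |h i| := abs_pos.mpr hi
    linarith
  -- key per-coordinate bound: (1+M)|h i| ≤ M*T
  have hkey : ∀ i, (1 + M) * |h i| ≤ M * T := by
    intro i
    have hsum : ∑ j, ((fun r => A r i) ⬝ᵥ (fun r => A r j)) * h j = 0 := by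
      have e1 : ∑ j, ((fun r => A r i) ⬝ᵥ (fun r => A r j)) * h j
          = ∑ r, A r i * (A.mulVec h r) := by
        simp only [dotProduct, Matrix.mulVec, Finset.sum_mul, Finset.mul_sum]
        rw [Finset.sum_comm]
        exact Finset.sum_congr rfl fun r _ => Finset.sum_congr rfl fun j _ => by ring
      rw [e1, hAh]
      simp
    have he := Finset.sum_erase_add Finset.univ
      (fun j => ((fun r => A r i) ⬝ᵥ (fun r => A r j)) * h j) (Finset.mem_univ i)
    rw [hsum] at he
    beta_reduce at he
    rw [hunit i, one_mul] at he
    have habs : |h i| = |∑ j ∈ Finset.univ.erase i,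
        ((fun r => A r i) ⬝ᵥ (fun r => A r j)) * h j| := by
      rw [show (∑ j ∈ Finset.univ.erase i,
        ((fun r => A r i) ⬝ᵥ (fun r => A r j)) * h j) = -h i by linarith, abs_neg]
    have hb : |∑ j ∈ Finset.univ.erase i,
        ((fun r => A r i) ⬝ᵥ (fun r => A r j)) * h j|
        ≤ ∑ j ∈ Finset.univ.erase i, M * |h j| := by
      refine le_trans (Finset.abs_sum_le_sum_abs _ _) (Finset.sum_le_sum fun j hj => ?_)
      rw [abs_mul]
      exact mul_le_mul_of_nonneg_right
        (hG i j (fun e => (Finset.ne_of_mem_erase hj) e.symm)) (abs_nonneg _)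
    have hrest : ∑ j ∈ Finset.univ.erase i, |h j| = T - |h i| := by
      have := Finset.sum_erase_add Finset.univ (fun j => |h j|) (Finset.mem_univ i)
      linarith [this]
    rw [← Finset.mul_sum, hrest] at hb
    have := habs ▸ hb
    linarith
  -- the support
  set S : Finset (Fin n) := Finset.univ.filter (fun i => xt i ≠ 0) with hS
  have hcard : (S.card : ℝ) = (l0 xt : ℝ) := by rw [l0]
  have hSsum : ∑ i ∈ S, |h i| < T / 2 := by
    have h1 : ∑ i ∈ S, |h i| ≤ S.card * (M * T / (1 + M)) := by
      rw [← nsmul_eq_mul]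
      refine Finset.sum_le_card_nsmul S _ _ fun i _ => ?_
      rw [le_div_iff₀ (by linarith)]
      have := hkey i
      linarith
    have h2 : (S.card : ℝ) * (M * T / (1 + M)) < T / 2 := by
      rw [hcard]
      have hMne : (0:ℝ) < 1 + M := by linarith
      have e : (1 / 2) * (1 + 1 / M) * M = (M + 1) / 2 := by
        field_simp
      have hk : (l0 xt : ℝ) * M < (M + 1) / 2 := by
        have := mul_lt_mul_of_pos_right hxt hM
        linarith [e ▸ this]
      rw [show (l0 xt : ℝ) * (M * T / (1 + M)) = ((l0 xt : ℝ) * M) * T / (1 + M) by ring,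
        div_lt_div_iff₀ hMne (by norm_num : (0:ℝ) < 2)]
      nlinarith
    linarith
  -- final estimate
  have hsplit1 : l1 x = ∑ i ∈ S, |x i| + ∑ i ∈ Finset.univ.filter (fun i => ¬ xt i ≠ 0), |x i| := by
    rw [l1, ← Finset.sum_filter_add_sum_filter_not Finset.univ (fun i => xt i ≠ 0)]
  have hsplit2 : l1 xt = ∑ i ∈ S, |xt i| := by
    rw [l1, ← Finset.sum_filter_add_sum_filter_not Finset.univ (fun i => xt i ≠ 0)]
    have : ∑ i ∈ Finset.univ.filter (fun i => ¬ xt i ≠ 0), |xt i| = 0 := by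
      refine Finset.sum_eq_zero fun i hi => ?_
      simp only [Finset.mem_filter, not_not] at hi
      rw [hi.2, abs_zero]
    rw [this, add_zero]
  have hTsplit : ∑ i ∈ Finset.univ.filter (fun i => ¬ xt i ≠ 0), |h i| = T - ∑ i ∈ S, |h i| := by
    have := Finset.sum_filter_add_sum_filter_not Finset.univ (fun i => xt i ≠ 0) (fun i => |h i|)
    rw [hT]
    linarith [this]
  have hA1 : ∑ i ∈ S, |xt i| - ∑ i ∈ S, |h i| ≤ ∑ i ∈ S, |x i| := by
    rw [← Finset.sum_sub_distrib]
    refine Finset.sum_le_sum fun i _ => ?_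
    have : |xt i| - |x i| ≤ |xt i - x i| := abs_sub_abs_le_abs_sub _ _
    have e : |xt i - x i| = |h i| := by rw [hh]; rw [show xt i - x i = -(x i - xt i) by ring, abs_neg]
    linarith
  have hA2 : ∑ i ∈ Finset.univ.filter (fun i => ¬ xt i ≠ 0), |x i|
      = ∑ i ∈ Finset.univ.filter (fun i => ¬ xt i ≠ 0), |h i| := by
    refine Finset.sum_congr rfl fun i hi => ?_
    simp only [Finset.mem_filter, not_not] at hi
    rw [hh]
    simp [hi.2]
  rw [hsplit1, hsplit2, hA2, hTsplit]
  linarith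
end
end

section
/- Let A be an m×n matrix with unit-norm columns and coherence M(A) > 0. If x̃ ∈ R^n satisfies ‖x̃‖₀ < (1/2)(1 + 1/M(A)), then x̃ is the unique sparsest solution of Ax = Ax̃; i.e., any x with Ax = Ax̃ and ‖x‖₀ ≤ ‖x̃‖₀ equals x̃. -/
noncomputable section
open scoped Matrix

theorem stmt15 {m n : ℕ} (A : Matrix (Fin m) (Fin n) ℝ)
    (hunit : ∀ i : Fin n, (fun r => A r i) ⬝ᵥ (fun r => A r i) = 1)
    (hM : 0 < coherence A)
    (xt : Fin n → ℝ) (hxt : (l0 xt : ℝ) < (1 / 2) * (1 + 1 / coherence A)) :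
    ∀ x : Fin n → ℝ, A.mulVec x = A.mulVec xt → l0 x ≤ l0 xt → x = xt := by
  set M := coherence A with hMdef
  -- coherence bounds each off-diagonal Gram entry
  have hbdd : BddAbove {x | ∃ i j : Fin n, i ≠ j ∧
      x = abs ((fun r => A r i) ⬝ᵥ (fun r => A r j))} := by
    refine ⟨1, fun x hx => ?_⟩
    obtain ⟨i, j, hij, rfl⟩ := hx
    have hcs := Finset.sum_mul_sq_le_sq_mul_sq Finset.univ (fun r => A r i) (fun r => A r j)
    have hi := hunit i
    have hj := hunit j
    simp only [dotProduct] at hi hj ⊢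
    have h1 : ∑ r, A r i * A r i = ∑ r, (A r i)^2 := by
      apply Finset.sum_congr rfl; intro r _; ring
    have h2 : ∑ r, A r j * A r j = ∑ r, (A r j)^2 := by
      apply Finset.sum_congr rfl; intro r _; ring
    have : (∑ r, A r i * A r j)^2 ≤ 1 := by
      rw [h1] at hi; rw [h2] at hj
      calc (∑ r, A r i * A r j)^2 ≤ (∑ r, (A r i)^2) * (∑ r, (A r j)^2) := hcs
        _ = 1 := by rw [hi, hj]; ring
    nlinarith [abs_nonneg (∑ r, A r i * A r j), sq_abs (∑ r, A r i * A r j)]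
  have hMle : ∀ i j : Fin n, i ≠ j →
      |(fun r => A r i) ⬝ᵥ (fun r => A r j)| ≤ M := by
    intro i j hij
    exact le_csSup hbdd ⟨i, j, hij, rfl⟩
  intro x hAx hl0
  by_contra hne
  set y : Fin n → ℝ := fun i => x i - xt i with hy
  have hy0 : ∃ i, y i ≠ 0 := by
    by_contra h
    push_neg at h
    apply hne
    funext i
    have := h i
    simp only [hy] at this
    linarith
  have hAy : A.mulVec y = 0 := by
    have : A.mulVec y = A.mulVec x - A.mulVec xt := by
      funext r
      simp [Matrix.mulVec, dotProduct, hy, mul_sub, Finset.sum_sub_distrib]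
    rw [this, hAx, sub_self]
  -- support of y
  set S : Finset (Fin n) := Finset.univ.filter (fun i => y i ≠ 0) with hS
  have hScard : S.card ≤ 2 * l0 xt := by
    have hsub : S ⊆ (Finset.univ.filter fun i => x i ≠ 0) ∪
        (Finset.univ.filter fun i => xt i ≠ 0) := by
      intro i hi
      simp only [hS, Finset.mem_filter, Finset.mem_univ, true_and] at hi
      simp only [Finset.mem_union, Finset.mem_filter, Finset.mem_univ, true_and]
      by_contra h
      push_neg at h
      apply hi
      simp [hy, h.1, h.2]
    calc S.card ≤ _ := Finset.card_le_card hsub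
      _ ≤ _ + _ := Finset.card_union_le _ _
      _ ≤ l0 xt + l0 xt := by
        have : l0 x ≤ l0 xt := hl0
        simp only [l0] at this ⊢
        omega
      _ = 2 * l0 xt := by ring
  -- pick index with maximal |y i|
  obtain ⟨i0, hi0⟩ := hy0
  obtain ⟨i, -, hi⟩ := Finset.exists_max_image Finset.univ (fun i => |y i|)
    ⟨i0, Finset.mem_univ i0⟩
  have hyi : 0 < |y i| := lt_of_lt_of_le (abs_pos.mpr hi0) (hi i0 (Finset.mem_univ i0))
  have hiS : i ∈ S := by
    simp only [hS, Finset.mem_filter, Finset.mem_univ, true_and]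
    exact abs_pos.mp hyi
  -- key equation: ∑ j G i j * y j = 0
  have hkey : ∑ j, ((fun r => A r i) ⬝ᵥ (fun r => A r j)) * y j = 0 := by
    have : ∑ j, ((fun r => A r i) ⬝ᵥ (fun r => A r j)) * y j
        = (fun r => A r i) ⬝ᵥ (A.mulVec y) := by
      simp only [dotProduct, Matrix.mulVec, Finset.sum_mul, Finset.mul_sum]
      rw [Finset.sum_comm]
      apply Finset.sum_congr rfl; intro r _
      apply Finset.sum_congr rfl; intro j _
      ring
    rw [this, hAy]
    simp [dotProduct]
  have hsplit : y i = -∑ j ∈ Finset.univ.erase i,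
      ((fun r => A r i) ⬝ᵥ (fun r => A r j)) * y j := by
    have := hkey
    rw [← Finset.add_sum_erase _ _ (Finset.mem_univ i)] at this
    rw [hunit i] at this
    linarith
  have hbound : |y i| ≤ M * ((S.card : ℝ) - 1) * |y i| := by
    calc |y i| = |∑ j ∈ Finset.univ.erase i,
        ((fun r => A r i) ⬝ᵥ (fun r => A r j)) * y j| := by rw [hsplit, abs_neg]
      _ ≤ ∑ j ∈ Finset.univ.erase i,
          |((fun r => A r i) ⬝ᵥ (fun r => A r j)) * y j| := Finset.abs_sum_le_sum_abs _ _
      _ = ∑ j ∈ S.erase i,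
          |((fun r => A r i) ⬝ᵥ (fun r => A r j)) * y j| := by
        apply (Finset.sum_subset ?_ ?_).symm
        · intro j hj
          simp only [Finset.mem_erase] at hj ⊢
          exact ⟨hj.1, Finset.mem_univ j⟩
        · intro j hj hj2
          simp only [Finset.mem_erase, hS, Finset.mem_filter, Finset.mem_univ, true_and,
            not_and] at hj hj2
          have : y j = 0 := by
            by_contra h
            exact (hj2 hj.1) h
          simp [this]
      _ ≤ ∑ j ∈ S.erase i, M * |y i| := by
        apply Finset.sum_le_sum
        intro j hj
        rw [abs_mul]
        have h1 := hMle i j (fun h => (Finset.mem_erase.mp hj).1 h.symm)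
        have h2 := hi j (Finset.mem_univ j)
        have := abs_nonneg (y j)
        nlinarith [abs_nonneg ((fun r => A r i) ⬝ᵥ (fun r => A r j))]
      _ = M * ((S.card : ℝ) - 1) * |y i| := by
        rw [Finset.sum_const, nsmul_eq_mul, Finset.card_erase_of_mem hiS]
        have h1 : 1 ≤ S.card := Finset.card_pos.mpr ⟨i, hiS⟩
        have : ((S.card - 1 : ℕ) : ℝ) = (S.card : ℝ) - 1 := by
          push_cast [Nat.cast_sub h1]
          ring
        rw [this]; ring
  have h1M : 1 ≤ M * ((S.card : ℝ) - 1) := by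
    nlinarith
  have hlt : (S.card : ℝ) < 1 + 1 / M := by
    calc (S.card : ℝ) ≤ 2 * (l0 xt : ℝ) := by exact_mod_cast hScard
      _ < 1 + 1 / M := by linarith
  have : 1 / M ≤ (S.card : ℝ) - 1 := by
    rw [div_le_iff₀ hM]
    nlinarith
  linarith
end
end

section
/- Let A be an m×n matrix with unit-norm columns and coherence M(A) > 0. For every nonzero v in the null space of A, ‖v‖₀ ≥ 1 + 1/M(A). -/
noncomputable section
open scoped Matrix

theorem stmt17 {m n : ℕ} (A : Matrix (Fin m) (Fin n) ℝ)
    (hunit : ∀ i : Fin n, (fun r => A r i) ⬝ᵥ (fun r => A r i) = 1)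
    (hM : 0 < coherence A) :
    ∀ v : Fin n → ℝ, A.mulVec v = 0 → v ≠ 0 → 1 + 1 / coherence A ≤ (l0 v : ℝ) := by
  set M := coherence A with hMdef
  -- every inner product is bounded by 1 (Cauchy-Schwarz + unit columns)
  have hbdd : BddAbove {x | ∃ i j : Fin n, i ≠ j ∧
      x = abs ((fun r => A r i) ⬝ᵥ (fun r => A r j))} := by
    refine ⟨1, ?_⟩
    rintro x ⟨i, j, hij, rfl⟩
    have hcs := Finset.sum_mul_sq_le_sq_mul_sq Finset.univ (fun r => A r i) (fun r => A r j)
    have h1 : ∑ r, A r i ^ 2 = 1 := by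
      have := hunit i; simpa [dotProduct, sq] using this
    have h2 : ∑ r, A r j ^ 2 = 1 := by
      have := hunit j; simpa [dotProduct, sq] using this
    rw [h1, h2, one_mul] at hcs
    have : ((fun r => A r i) ⬝ᵥ (fun r => A r j)) ^ 2 ≤ 1 := by
      simpa [dotProduct] using hcs
    nlinarith [abs_nonneg ((fun r => A r i) ⬝ᵥ (fun r => A r j)),
      sq_abs ((fun r => A r i) ⬝ᵥ (fun r => A r j))]
  have hMle : ∀ i j : Fin n, i ≠ j →
      |((fun r => A r i) ⬝ᵥ (fun r => A r j))| ≤ M :=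
    fun i j hij => le_csSup hbdd ⟨i, j, hij, rfl⟩
  intro v hv hv0
  obtain ⟨i0, hi0⟩ : ∃ i, v i ≠ 0 := by
    by_contra h
    push_neg at h
    exact hv0 (funext h)
  -- index with maximal absolute value
  obtain ⟨i1, -, hi1⟩ := Finset.exists_max_image Finset.univ (fun j => |v j|)
    ⟨i0, Finset.mem_univ i0⟩
  set t := |v i1| with htdef
  have ht : 0 < t := lt_of_lt_of_le (abs_pos.mpr hi0) (hi1 i0 (Finset.mem_univ i0))
  -- key identity: v i + ∑_{j ≠ i} ⟨a_i,a_j⟩ v_j = 0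
  have key : ∀ i : Fin n,
      v i + ∑ j ∈ Finset.univ.erase i, ((fun r => A r i) ⬝ᵥ (fun r => A r j)) * v j = 0 := by
    intro i
    have h0 : ∑ j, ((fun r => A r i) ⬝ᵥ (fun r => A r j)) * v j = 0 := by
      have : ∑ j, ((fun r => A r i) ⬝ᵥ (fun r => A r j)) * v j
          = ∑ r, A r i * (A.mulVec v r) := by
        simp only [dotProduct, Matrix.mulVec, Finset.sum_mul, Finset.mul_sum]
        rw [Finset.sum_comm]
        congr 1; ext r; congr 1; ext j; ring
      rw [this, hv]
      simp
    rw [← h0]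
    rw [← Finset.add_sum_erase Finset.univ _ (Finset.mem_univ i)]
    rw [hunit i, one_mul]
  -- bound t ≤ M * (l1 v - t)
  have hsum : ∑ j ∈ Finset.univ.erase i1, |v j| = l1 v - t := by
    have := Finset.add_sum_erase Finset.univ (fun j => |v j|) (Finset.mem_univ i1)
    simp only [l1] at *
    linarith
  have hkey1 := key i1
  have hbound : t ≤ M * (l1 v - t) := by
    have hv1 : v i1 = -∑ j ∈ Finset.univ.erase i1,
        ((fun r => A r i1) ⬝ᵥ (fun r => A r j)) * v j := by linarith
    calc t = |∑ j ∈ Finset.univ.erase i1,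
          ((fun r => A r i1) ⬝ᵥ (fun r => A r j)) * v j| := by
            rw [htdef, hv1, abs_neg]
      _ ≤ ∑ j ∈ Finset.univ.erase i1,
          |((fun r => A r i1) ⬝ᵥ (fun r => A r j)) * v j| := Finset.abs_sum_le_sum_abs _ _
      _ ≤ ∑ j ∈ Finset.univ.erase i1, M * |v j| := by
          refine Finset.sum_le_sum fun j hj => ?_
          rw [abs_mul]
          exact mul_le_mul_of_nonneg_right
            (hMle i1 j (Ne.symm (Finset.ne_of_mem_erase hj))) (abs_nonneg _)
      _ = M * (l1 v - t) := by rw [← Finset.mul_sum, hsum]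
  -- l1 v ≤ l0 v * t
  have hl1 : l1 v ≤ (l0 v : ℝ) * t := by
    have : l1 v = ∑ i ∈ Finset.univ.filter (fun i => v i ≠ 0), |v i| := by
      rw [l1]
      symm
      apply Finset.sum_subset (Finset.filter_subset _ _)
      intro x _ hx
      simp only [Finset.mem_filter, Finset.mem_univ, true_and, not_not] at hx
      simp [hx]
    rw [this, l0]
    calc ∑ i ∈ Finset.univ.filter (fun i => v i ≠ 0), |v i|
        ≤ ∑ _i ∈ Finset.univ.filter (fun i => v i ≠ 0), t :=
          Finset.sum_le_sum fun i _ => hi1 i (Finset.mem_univ i)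
      _ = _ := by rw [Finset.sum_const, nsmul_eq_mul]
  -- conclude
  have hfin : (1 + M) * t ≤ M * ((l0 v : ℝ) * t) := by
    nlinarith [mul_le_mul_of_nonneg_left hl1 (le_of_lt hM)]
  rw [show (1 : ℝ) + 1 / M = (M + 1) / M by field_simp, div_le_iff₀ hM]
  nlinarith
end
end
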